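/- The centre of the pure braid group PBr₃ is generated by (a·b·a)²: an element z of PBr₃ = ker ρ commutes with every element of PBr₃ if and only if z is an integer power of (a·b·a)². In particular (a·b·a)² lies in the centre of PBr₃. -/

import Mathlib

/-- The single braid relation `a·b·a·(b·a·b)⁻¹` on two generators. -/
def braidRels : Set (FreeGroup (Fin 2)) :=
  {FreeGroup.of 0 * FreeGroup.of 1 * FreeGroup.of 0 *
    (FreeGroup.of 1 * FreeGroup.of 0 * FreeGroup.of 1)⁻¹}

/-- The braid group on three strings, `Br₃ = ⟨a, b | a·b·a = b·a·b⟩`. -/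
abbrev Br3 : Type := PresentedGroup braidRels

/-- The first generator `a` of `Br₃`. -/
def braidA : Br3 := PresentedGroup.of 0

/-- The second generator `b` of `Br₃`. -/
def braidB : Br3 := PresentedGroup.of 1

/-- The images `σ = (swap 0 1, swap 1 2)` of the generators in `Sym₃`. -/
def braidSigma : Fin 2 → Equiv.Perm (Fin 3) := ![Equiv.swap 0 1, Equiv.swap 1 2]

theorem braidRels_hold : ∀ r ∈ braidRels, FreeGroup.lift braidSigma r = 1 := by
  intro r hr
  rw [braidRels, Set.mem_singleton_iff] at hr
  subst hr
  simp only [map_mul, map_inv, FreeGroup.lift_apply_of, braidSigma, Matrix.cons_val_zero,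
    Matrix.cons_val_one, Matrix.head_cons]
  decide

/-- The natural homomorphism `ρ : Br₃ → Sym₃` sending `a ↦ (0 1)` and `b ↦ (1 2)`. -/
def braidRho : Br3 →* Equiv.Perm (Fin 3) := PresentedGroup.toGroup braidRels_hold

/-!
Map `Br₃` to `SL(2, ℤ)` by `a ↦ T`, `b ↦ S T S⁻¹`; then `Δ = a·b·a ↦ S⁻¹`, so `Δ² ↦ -1`.
A central pure braid `z` commutes with the pure braids `a²` and `b²`, whose images are the
transvections `T²` and `S T² S⁻¹`; their common centraliser in `SL(2, ℤ)` is `±1`,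
so `z` acts trivially on the upper half plane. On the other hand the action of `Br₃ ⧸ ⟨Δ²⟩` on
`ℍ` is faithful: this quotient is generated by `Δ⁻¹`, of order 2, acting as `S`, and `(b·a)⁻¹`,
of order 3, acting as `S T`, and these play ping-pong on the half planes `re > 0` and `re < 0`.
Hence `z ∈ ⟨Δ²⟩`. Conversely `Δ² = (a·b)³ = (b·a)³` is central in all of `Br₃`.
-/

open MatrixGroups ModularGroup UpperHalfPlane Pointwise

section BraidRelation

variable {G : Type*} [Group G] {a b : G}

theorem sq_braid_eq_pow_three_left (h : a * b * a = b * a * b) :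
    (a * b * a) ^ 2 = (a * b) ^ 3 := by
  calc (a * b * a) ^ 2 = (a * b * a) * (b * a * b) := by rw [sq, ← h]
    _ = (a * b) ^ 3 := by simp only [pow_succ, pow_zero, one_mul, mul_assoc]

theorem sq_braid_eq_pow_three_right (h : a * b * a = b * a * b) :
    (a * b * a) ^ 2 = (b * a) ^ 3 := by
  calc (a * b * a) ^ 2 = (b * a * b) * (a * b * a) := by rw [sq, ← h]
    _ = (b * a) ^ 3 := by simp only [pow_succ, pow_zero, one_mul, mul_assoc]

theorem commute_sq_braid_left (h : a * b * a = b * a * b) : Commute ((a * b * a) ^ 2) a := by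
  calc (a * b * a) ^ 2 * a = (a * b) ^ 3 * a := by rw [sq_braid_eq_pow_three_left h]
    _ = a * (b * a) ^ 3 := by simp only [pow_succ, pow_zero, one_mul, mul_assoc]
    _ = a * (a * b * a) ^ 2 := by rw [sq_braid_eq_pow_three_right h]

theorem commute_sq_braid_right (h : a * b * a = b * a * b) : Commute ((a * b * a) ^ 2) b := by
  calc (a * b * a) ^ 2 * b = (b * a) ^ 3 * b := by rw [sq_braid_eq_pow_three_right h]
    _ = b * (a * b) ^ 3 := by simp only [pow_succ, pow_zero, one_mul, mul_assoc]
    _ = b * (a * b * a) ^ 2 := by rw [sq_braid_eq_pow_three_left h]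

end BraidRelation

section PingPong

variable {G : Type*} [Group G]

theorem exists_pow_eq_of_mem_zpowers {g h : G} {n : ℕ} (hn : 0 < n) (hg : g ^ n = 1)
    (hh : h ∈ Subgroup.zpowers g) : ∃ k < n, g ^ k = h := by
  obtain ⟨m, rfl⟩ := Subgroup.mem_zpowers_iff.mp hh
  have hlt := Int.emod_lt_of_pos m (by omega : (0 : ℤ) < n)
  have hnonneg := Int.emod_nonneg m (by omega : (n : ℤ) ≠ 0)
  refine ⟨(m % n).toNat, by omega, ?_⟩
  rw [← zpow_natCast, Int.toNat_of_nonneg hnonneg, ← zpow_eq_zpow_emod' m hg]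

theorem mk_zpowers_of_pow_prime {p : ℕ} [Fact p.Prime] {g : G} (hg : g ^ p = 1) (hg1 : g ≠ 1) :
    Cardinal.mk (Subgroup.zpowers g) = p := by
  have hcard : Nat.card (Subgroup.zpowers g) = p := by
    rw [Nat.card_zpowers, orderOf_eq_prime hg hg1]
  have : Finite (Subgroup.zpowers g) :=
    Nat.finite_of_card_ne_zero (hcard ▸ (Fact.out : p.Prime).ne_zero)
  rw [← Nat.cast_card, hcard]

theorem injective_of_ping_pong_two_three {Q α : Type*} [Group Q] [MulAction G α] (φ : Q →* G)
    {x y : Q} (hx : x ^ 2 = 1) (hy : y ^ 3 = 1) (hgen : Subgroup.closure {x, y} = ⊤)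
    {X Y : Set α} (hX : X.Nonempty) (hXY : Disjoint X Y) (hxY : φ x • Y ⊆ X)
    (hyX : φ y • X ⊆ Y) (hy2X : φ (y ^ 2) • X ⊆ Y) : Function.Injective φ := by
  let H : Bool → Subgroup Q := fun b => Subgroup.zpowers (cond b y x)
  -- `τ` maps `⟨x⟩ ∗ ⟨y⟩` onto `Q`, and ping-pong makes `φ ∘ τ` injective.
  let τ : Monoid.CoprodI (fun b => H b) →* Q := Monoid.CoprodI.lift fun b => (H b).subtype
  have hτ : Function.Surjective τ := by
    rw [← MonoidHom.range_eq_top, eq_top_iff, ← hgen, Subgroup.closure_le,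
      Set.insert_subset_iff, Set.singleton_subset_iff]
    exact ⟨⟨Monoid.CoprodI.of (i := false) ⟨x, Subgroup.mem_zpowers x⟩, by simp [τ]⟩,
      ⟨Monoid.CoprodI.of (i := true) ⟨y, Subgroup.mem_zpowers y⟩, by simp [τ]⟩⟩
  have hy1 : y ≠ 1 := by
    rintro rfl
    obtain ⟨p, hp⟩ := hX
    rw [map_one, one_smul] at hyX
    exact hXY.ne_of_mem hp (hyX hp) rfl
  let Z : Bool → Set α := fun b => cond b Y X
  have hZ : ∀ b, (Z b).Nonempty := by
    rintro (_ | _)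
    · exact hX
    · exact hX.smul_set.mono hyX
  have hZdisj : Pairwise (Function.onFun Disjoint Z) := by
    rintro (_ | _) (_ | _) h <;> first | exact absurd rfl h | exact hXY | exact hXY.symm
  have hpp : Pairwise fun i j => ∀ h : H i, h ≠ 1 → (φ.comp (H i).subtype) h • Z j ⊆ Z i := by
    rintro (_ | _) (_ | _) hij ⟨h, hh⟩ hne <;> try exact absurd rfl hij
    · obtain ⟨k, hk, rfl⟩ := exists_pow_eq_of_mem_zpowers two_pos hx hh
      interval_cases k
      · exact (hne (Subtype.ext (pow_zero _))).elim
      · simpa [Z] using hxY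
    · obtain ⟨k, hk, rfl⟩ := exists_pow_eq_of_mem_zpowers three_pos hy hh
      interval_cases k
      · exact (hne (Subtype.ext (pow_zero _))).elim
      · simpa [Z] using hyX
      · simpa [Z] using hy2X
  have hφτ : φ.comp τ = Monoid.CoprodI.lift fun b => φ.comp (H b).subtype :=
    Monoid.CoprodI.ext_hom _ _ fun b => by ext; simp [τ]
  have hinj := Monoid.CoprodI.lift_injective_of_ping_pong _
    (Or.inr ⟨true, (mk_zpowers_of_pow_prime hy hy1).ge⟩) Z hZ hZdisj hpp
  rw [← hφτ, MonoidHom.coe_comp] at hinj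
  exact hinj.of_comp_right hτ

end PingPong

theorem ModularGroup.eq_one_or_neg_one_of_commute_T_sq {g : SL(2, ℤ)} (hT : Commute g (T ^ 2))
    (hL : Commute g ((S * T * S⁻¹) ^ 2)) : g = 1 ∨ g = -1 := by
  have hT' := (hT.map Matrix.SpecialLinearGroup.coeMonoidHom).eq
  have hL' := (hL.map Matrix.SpecialLinearGroup.coeMonoidHom).eq
  have hT2 : Matrix.SpecialLinearGroup.coeMonoidHom (T ^ 2) = !![1, 2; 0, 1] := by decide
  have hL2 : Matrix.SpecialLinearGroup.coeMonoidHom ((S * T * S⁻¹) ^ 2) = !![1, 0; -2, 1] := by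
    decide
  rw [hT2, Matrix.SpecialLinearGroup.coeMonoidHom_apply, Matrix.eta_fin_two (g : Matrix _ _ ℤ),
    Matrix.mul_fin_two, Matrix.mul_fin_two] at hT'
  rw [hL2, Matrix.SpecialLinearGroup.coeMonoidHom_apply, Matrix.eta_fin_two (g : Matrix _ _ ℤ),
    Matrix.mul_fin_two, Matrix.mul_fin_two] at hL'
  simp only [EmbeddingLike.apply_eq_iff_eq, Matrix.vecCons_inj] at hT' hL'
  have hdet := g.det_coe
  rw [Matrix.det_fin_two] at hdet
  have hb : g 0 1 = 0 := by omega
  have hc : g 1 0 = 0 := by omega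
  have hd : g 1 1 = g 0 0 := by omega
  rw [hb, hc, hd] at hdet
  have hsq : g 0 0 * g 0 0 = 1 := by linarith
  rcases Int.mul_eq_one_iff_eq_one_or_neg_one.mp hsq with ⟨ha, -⟩ | ⟨ha, -⟩
  · left; ext i j; fin_cases i <;> fin_cases j <;> simp [hb, hc, hd, ha]
  · right; ext i j; fin_cases i <;> fin_cases j <;> simp [hb, hc, hd, ha]

theorem MulAction.toPermHom_smul {G α : Type*} [Group G] [MulAction G α] (g : G) (a : α) :
    MulAction.toPermHom G α g • a = g • a :=
  rfl

namespace UpperHalfPlane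

theorem re_S_smul (z : ℍ) : (S • z).re = -z.re / Complex.normSq (z : ℂ) := by
  rw [modular_S_smul]
  simp [Complex.inv_re, neg_div]

theorem re_S_smul_pos_iff (z : ℍ) : 0 < (S • z).re ↔ z.re < 0 := by
  rw [re_S_smul, div_pos_iff_of_pos_right z.normSq_pos, neg_pos]

theorem re_S_smul_neg_iff (z : ℍ) : (S • z).re < 0 ↔ 0 < z.re := by
  rw [re_S_smul, div_lt_iff₀ z.normSq_pos, zero_mul, neg_lt_zero]

theorem toPermHom_neg (g : SL(2, ℤ)) :
    MulAction.toPermHom SL(2, ℤ) ℍ (-g) = MulAction.toPermHom SL(2, ℤ) ℍ g :=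
  Equiv.ext (SL_neg_smul g)

end UpperHalfPlane

local notation "Δ" => braidA * braidB * braidA

namespace Br3

variable {G : Type*} [Group G] {x y : G} (h : x * y * x = y * x * y)

def lift : Br3 →* G :=
  PresentedGroup.toGroup (f := ![x, y]) <| by
    rintro _ rfl
    simp [h]

theorem lift_braidA : lift h braidA = x := PresentedGroup.toGroup.of _

theorem lift_braidB : lift h braidB = y := PresentedGroup.toGroup.of _

end Br3

theorem braidA_mul_braidB_mul_braidA : Δ = braidB * braidA * braidB := by
  rw [← mul_inv_eq_one]
  exact (QuotientGroup.eq_one_iff _).mpr (Subgroup.subset_normalClosure rfl)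

theorem closure_braidA_braidB : Subgroup.closure {braidA, braidB} = ⊤ := by
  rw [eq_top_iff, ← PresentedGroup.closure_range_of, Subgroup.closure_le]
  rintro _ ⟨i, rfl⟩
  fin_cases i
  · exact Subgroup.subset_closure (Set.mem_insert _ _)
  · exact Subgroup.subset_closure (Set.mem_insert_of_mem _ rfl)

theorem closure_inv_delta_inv_braidB_mul_braidA :
    Subgroup.closure {(Δ)⁻¹, (braidB * braidA)⁻¹} = ⊤ := by
  set K := Subgroup.closure {(Δ)⁻¹, (braidB * braidA)⁻¹}
  have hΔ : (Δ)⁻¹⁻¹ ∈ K := inv_mem (Subgroup.subset_closure (Set.mem_insert _ _))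
  have hba : (braidB * braidA)⁻¹ ∈ K := Subgroup.subset_closure (Set.mem_insert_of_mem _ rfl)
  have hA : braidA = (Δ)⁻¹⁻¹ * (braidB * braidA)⁻¹ := by group
  have hB : braidB = (braidB * braidA)⁻¹ * (Δ)⁻¹⁻¹ := by
    rw [inv_inv, braidA_mul_braidB_mul_braidA]; group
  rw [eq_top_iff, ← closure_braidA_braidB, Subgroup.closure_le, Set.insert_subset_iff,
    Set.singleton_subset_iff, SetLike.mem_coe, SetLike.mem_coe]
  exact ⟨hA ▸ mul_mem hΔ hba, hB ▸ mul_mem hba hΔ⟩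

theorem sq_delta_mem_center : Δ ^ 2 ∈ Subgroup.center Br3 := by
  rw [← Subgroup.centralizer_univ, ← Subgroup.coe_top, ← closure_braidA_braidB,
    Subgroup.centralizer_closure, Subgroup.mem_centralizer_iff]
  rintro g (rfl | rfl)
  · exact (commute_sq_braid_left braidA_mul_braidB_mul_braidA).eq.symm
  · exact (commute_sq_braid_right braidA_mul_braidB_mul_braidA).eq.symm

instance : (Subgroup.zpowers (Δ ^ 2)).Normal :=
  ⟨fun n hn g => by
    rwa [(Subgroup.mem_center_iff.mp (Subgroup.zpowers_le.mpr sq_delta_mem_center hn) g),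
      mul_inv_cancel_right]⟩

theorem braidRho_braidA : braidRho braidA = Equiv.swap 0 1 := PresentedGroup.toGroup.of _

theorem braidRho_braidB : braidRho braidB = Equiv.swap 1 2 := PresentedGroup.toGroup.of _

theorem braidA_sq_mem_ker_braidRho : braidA ^ 2 ∈ braidRho.ker := by
  rw [MonoidHom.mem_ker, map_pow, braidRho_braidA]; decide

theorem braidB_sq_mem_ker_braidRho : braidB ^ 2 ∈ braidRho.ker := by
  rw [MonoidHom.mem_ker, map_pow, braidRho_braidB]; decide

def braidToSL2 : Br3 →* SL(2, ℤ) := Br3.lift (x := T) (y := S * T * S⁻¹) (by decide)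

theorem braidToSL2_braidA : braidToSL2 braidA = T := Br3.lift_braidA _

theorem braidToSL2_braidB : braidToSL2 braidB = S * T * S⁻¹ := Br3.lift_braidB _

theorem braidToSL2_delta : braidToSL2 Δ = S⁻¹ := by
  rw [map_mul, map_mul, braidToSL2_braidA, braidToSL2_braidB]; decide

theorem braidToSL2_inv_braidB_mul_braidA : braidToSL2 (braidB * braidA)⁻¹ = S * T := by
  rw [map_inv, map_mul, braidToSL2_braidA, braidToSL2_braidB]; decide

theorem braidToSL2_eq_one_or_neg_one_of_commute {z : braidRho.ker}
    (hz : ∀ w : braidRho.ker, z * w = w * z) : braidToSL2 z = 1 ∨ braidToSL2 z = -1 := by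
  have key : ∀ g (hg : g ∈ braidRho.ker), Commute (braidToSL2 z) (braidToSL2 g) := fun g hg =>
    ((show Commute z ⟨g, hg⟩ from hz _).map braidRho.ker.subtype).map braidToSL2
  apply eq_one_or_neg_one_of_commute_T_sq
  · simpa [braidToSL2_braidA] using key _ braidA_sq_mem_ker_braidRho
  · simpa [braidToSL2_braidB] using key _ braidB_sq_mem_ker_braidRho

noncomputable def braidQuotientToPerm : Br3 ⧸ Subgroup.zpowers (Δ ^ 2) →* Equiv.Perm ℍ :=
  QuotientGroup.lift _ ((MulAction.toPermHom SL(2, ℤ) ℍ).comp braidToSL2) <| by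
    rw [Subgroup.zpowers_le, MonoidHom.mem_ker, MonoidHom.comp_apply, map_pow,
      braidToSL2_delta, show (S⁻¹ ^ 2 : SL(2, ℤ)) = -1 by decide, toPermHom_neg, map_one]

theorem braidQuotientToPerm_mk (g : Br3) :
    braidQuotientToPerm g = MulAction.toPermHom SL(2, ℤ) ℍ (braidToSL2 g) := rfl

theorem braidQuotientToPerm_injective : Function.Injective braidQuotientToPerm := by
  set x : Br3 ⧸ Subgroup.zpowers (Δ ^ 2) := QuotientGroup.mk (Δ)⁻¹
  set y : Br3 ⧸ Subgroup.zpowers (Δ ^ 2) := QuotientGroup.mk (braidB * braidA)⁻¹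
  have hx : x ^ 2 = 1 := by
    rw [← QuotientGroup.mk_pow, QuotientGroup.eq_one_iff, inv_pow]
    exact inv_mem (Subgroup.mem_zpowers _)
  have hy : y ^ 3 = 1 := by
    rw [← QuotientGroup.mk_pow, QuotientGroup.eq_one_iff, inv_pow,
      ← sq_braid_eq_pow_three_right braidA_mul_braidB_mul_braidA]
    exact inv_mem (Subgroup.mem_zpowers _)
  have hgen : Subgroup.closure {x, y} = ⊤ := by
    have h := congrArg (Subgroup.map (QuotientGroup.mk' (Subgroup.zpowers (Δ ^ 2))))
      closure_inv_delta_inv_braidB_mul_braidA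
    rwa [MonoidHom.map_closure, Set.image_pair,
      Subgroup.map_top_of_surjective _ (QuotientGroup.mk'_surjective _)] at h
  have hφx : braidQuotientToPerm x = MulAction.toPermHom SL(2, ℤ) ℍ S := by
    rw [braidQuotientToPerm_mk, map_inv, braidToSL2_delta, inv_inv]
  have hφy : braidQuotientToPerm y = MulAction.toPermHom SL(2, ℤ) ℍ (S * T) := by
    rw [braidQuotientToPerm_mk, braidToSL2_inv_braidB_mul_braidA]
  have hφy2 : braidQuotientToPerm (y ^ 2) = MulAction.toPermHom SL(2, ℤ) ℍ (T⁻¹ * S) := by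
    rw [map_pow, hφy, ← map_pow, show (S * T) ^ 2 = T⁻¹ * S by decide]
  refine injective_of_ping_pong_two_three braidQuotientToPerm hx hy hgen
    (X := {z : ℍ | 0 < z.re}) (Y := {z : ℍ | z.re < 0}) ⟨(1 : ℝ) +ᵥ I, by simp⟩
    (Set.disjoint_left.mpr fun z (h₁ : 0 < z.re) (h₂ : z.re < 0) => lt_asymm h₁ h₂) ?_ ?_ ?_
  · rintro _ ⟨z, hz : z.re < 0, rfl⟩
    show 0 < (_ • z).re
    rwa [hφx, MulAction.toPermHom_smul, re_S_smul_pos_iff]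
  · rintro _ ⟨z, hz : 0 < z.re, rfl⟩
    show (_ • z).re < 0
    rw [hφy, MulAction.toPermHom_smul, mul_smul, re_S_smul_neg_iff, re_T_smul]
    linarith
  · rintro _ ⟨z, hz : 0 < z.re, rfl⟩
    show (_ • z).re < 0
    rw [hφy2, MulAction.toPermHom_smul, mul_smul, re_T_inv_smul]
    linarith [(re_S_smul_neg_iff z).mpr hz]

/-- The centre of the pure braid group `PBr₃ = ker ρ` is generated by `(a·b·a)²`:
an element of `PBr₃` commutes with every element of `PBr₃` if and only if it is an
integer power of `(a·b·a)²`.  In particular `(a·b·a)²` lies in the centre of `PBr₃`. -/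
theorem center_pure_braid_group :
    ((braidA * braidB * braidA) ^ 2 ∈ braidRho.ker) ∧
    (∀ z : braidRho.ker, (∀ w : braidRho.ker, z * w = w * z) ↔
        ∃ m : ℤ, (z : Br3) = ((braidA * braidB * braidA) ^ 2) ^ m) := by
  refine ⟨?_, fun z => ⟨fun hz => ?_, ?_⟩⟩
  · rw [MonoidHom.mem_ker, map_pow, map_mul, map_mul, braidRho_braidA, braidRho_braidB]
    decide
  · have hmk : (z : Br3 ⧸ Subgroup.zpowers (Δ ^ 2)) = 1 := by
      apply braidQuotientToPerm_injective
      rw [braidQuotientToPerm_mk, map_one]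
      rcases braidToSL2_eq_one_or_neg_one_of_commute hz with h | h
      · rw [h, map_one]
      · rw [h, toPermHom_neg, map_one]
    obtain ⟨m, hm⟩ := Subgroup.mem_zpowers_iff.mp ((QuotientGroup.eq_one_iff _).mp hmk)
    exact ⟨m, hm.symm⟩
  · rintro ⟨m, hm⟩ w
    apply Subtype.ext
    rw [Subgroup.coe_mul, Subgroup.coe_mul, hm]
    exact (Subgroup.mem_center_iff.mp (zpow_mem sq_delta_mem_center m) w).symm
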